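/- arXiv:2603.27595 — 2 statements merged into one kernel-verified Lean document; each statement's English description precedes it below -/
import Mathlib

section
/- Let ρ : [t₀, t₁] → ℝ be a C¹ positive function, and suppose (2μ+λ)·(d/dt) ln ρ(t) + P(ρ(t)) − P̄ = −F(t) for all t ∈ [t₀,t₁], where P is nondecreasing, P̄ is a constant with P(ρ(t)) ≥ P̄ for all t, μ, λ satisfy 2μ+λ > 0, and F is continuous. If ρ(t₀) = (3/2)ρ̂ and ρ(t₁) = (7/4)ρ̂ for some ρ̂ > 0, then ∫_{t₀}^{t₁} |F(τ)| dτ ≥ (2μ+λ)·ln(7/6). -/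
open Set

/-- The Lagrangian density-growth argument: if along a particle path the
positive `C¹` density satisfies `(2μ+λ) (ln ρ)' + P(ρ) − P̄ = −F` with `P`
nondecreasing, `P(ρ(t)) ≥ P̄`, and `ρ` rises from `(3/2)ρ̂` to `(7/4)ρ̂`, then
`∫ |F| ≥ (2μ+λ) ln(7/6)`. -/
theorem stmt_13 (t₀ t₁ μ lam Pbar ρhat : ℝ) (ht : t₀ ≤ t₁)
    (hml : 0 < 2 * μ + lam) (hρhat : 0 < ρhat)
    (ρ dl F : ℝ → ℝ) (P : ℝ → ℝ) (hPmono : Monotone P)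
    (hρpos : ∀ t ∈ Icc t₀ t₁, 0 < ρ t)
    (hρC1 : ∀ t ∈ Icc t₀ t₁, HasDerivAt ρ (dl t * ρ t) t)
    (hlog : ∀ t ∈ Icc t₀ t₁, HasDerivAt (fun s => Real.log (ρ s)) (dl t) t)
    (hdlcont : ContinuousOn dl (Icc t₀ t₁))
    (hFcont : ContinuousOn F (Icc t₀ t₁))
    (heq : ∀ t ∈ Icc t₀ t₁, (2 * μ + lam) * dl t + P (ρ t) - Pbar = -(F t))
    (hPge : ∀ t ∈ Icc t₀ t₁, Pbar ≤ P (ρ t))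
    (h0 : ρ t₀ = (3/2) * ρhat) (h1 : ρ t₁ = (7/4) * ρhat) :
    (2 * μ + lam) * Real.log (7/6) ≤ ∫ τ in t₀..t₁, |F τ| := by
  have huIcc : uIcc t₀ t₁ = Icc t₀ t₁ := uIcc_of_le ht
  have hdlInt : IntervalIntegrable dl MeasureTheory.volume t₀ t₁ := by
    apply ContinuousOn.intervalIntegrable
    rwa [huIcc]
  have hFInt : IntervalIntegrable (fun τ => |F τ|) MeasureTheory.volume t₀ t₁ := by
    apply ContinuousOn.intervalIntegrable
    rw [huIcc]; exact hFcont.abs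
  -- FTC
  have hftc : ∫ τ in t₀..t₁, dl τ = Real.log (ρ t₁) - Real.log (ρ t₀) := by
    apply intervalIntegral.integral_eq_sub_of_hasDerivAt
    · intro t ht'; rw [huIcc] at ht'; exact hlog t ht'
    · exact hdlInt
  have hlog76 : Real.log (ρ t₁) - Real.log (ρ t₀) = Real.log (7/6) := by
    rw [h0, h1, ← Real.log_div (by positivity) (by positivity)]
    congr 1
    field_simp
    ring
  -- pointwise bound
  have hpt : ∀ t ∈ Icc t₀ t₁, (2 * μ + lam) * dl t ≤ |F t| := by
    intro t ht'
    have h1' := heq t ht'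
    have h2 := hPge t ht'
    have : (2 * μ + lam) * dl t = -(F t) - (P (ρ t) - Pbar) := by linarith
    calc (2 * μ + lam) * dl t ≤ -(F t) := by linarith
      _ ≤ |F t| := neg_le_abs _
  have hmono : ∫ τ in t₀..t₁, (2 * μ + lam) * dl τ ≤ ∫ τ in t₀..t₁, |F τ| := by
    apply intervalIntegral.integral_mono_on ht (hdlInt.const_mul _) hFInt hpt
  rw [intervalIntegral.integral_const_mul, hftc, hlog76] at hmono
  exact hmono
end

section
/- Let Ω ⊂ ℝ³ be a bounded Lipschitz domain, and suppose u ∈ C([0,T]; C^{1/4}(Ω̄)) satisfies the uniform Hölder bound ⟨u(·,t)⟩^{1/4}_{Ω̄} ≤ A for all t ∈ [τ, T], and ∫_{t₁}^{t₂} ∫_Ω |u_t|² dx dt ≤ B²|t₂−t₁|⁰ (i.e. u_t ∈ L²(Ω×(τ,T)) with norm ≤ B). Then for all x ∈ Ω̄ and τ ≤ t₁ < t₂ ≤ T with |t₂ − t₁| ≤ 1: |u(x,t₂) − u(x,t₁)| ≤ C(A, B, Ω)·|t₂ − t₁|^{1/14}. -/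
/-!
Compare `u (x, t)` with the values of `u (·, t)` on `S = B_R(x) ∩ Ω`. At a point `y ∈ S` where the
time increment `‖u (y, t₂) - u (y, t₁)‖` is at most its average over `S`, the triangle inequality
gives `‖u (x, t₂) - u (x, t₁)‖ ≤ 2 A R^{1/4} + ⨍_S ‖u (·, t₂) - u (·, t₁)‖`, and by the fundamental
theorem of calculus and Cauchy–Schwarz on `(t₁, t₂) × S` this average is at most
`((t₂ - t₁) / |S|)^{1/2} B`. The density bound `|S| ≥ θ R³` and the choice `R = (t₂ - t₁)^{2/7}`
make both terms of order `(t₂ - t₁)^{1/14}`.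
-/

open MeasureTheory Set Metric
open scoped ENNReal

theorem integral_le_sqrt_measureReal_univ_mul_sqrt_integral_sq {α : Type*} [MeasurableSpace α]
    {μ : Measure α} [IsFiniteMeasure μ] {g : α → ℝ} (hg₀ : 0 ≤ᵐ[μ] g) (hg : MemLp g 2 μ) :
    ∫ a, g a ∂μ ≤ √(μ.real univ) * √(∫ a, g a ^ 2 ∂μ) := by
  have H := integral_mul_le_Lp_mul_Lq_of_nonneg Real.HolderConjugate.two_two hg₀
    (ae_of_all _ fun _ => zero_le_one) (by simpa using hg) (by simpa using memLp_const (1 : ℝ))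
  simp only [one_pow, mul_one, integral_const, smul_eq_mul, Real.rpow_two] at H
  rwa [Real.sqrt_eq_rpow, Real.sqrt_eq_rpow, mul_comm]

theorem norm_sub_le_two_mul_add_setAverage {α E : Type*} [MeasurableSpace α]
    [NormedAddCommGroup E] {μ : Measure α} {s : Set α} (hs₀ : μ s ≠ 0) (hs : μ s ≠ ∞)
    {f g : α → E} (hfg : IntegrableOn (fun y => ‖f y - g y‖) s μ) {a b : E} {ε : ℝ}
    (ha : ∀ y ∈ s, ‖a - f y‖ ≤ ε) (hb : ∀ y ∈ s, ‖g y - b‖ ≤ ε) :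
    ‖a - b‖ ≤ 2 * ε + ⨍ y in s, ‖f y - g y‖ ∂μ := by
  obtain ⟨y, hy, hle⟩ := exists_le_setAverage hs₀ hs hfg
  calc ‖a - b‖ = ‖(a - f y) + (f y - g y) + (g y - b)‖ := by abel_nf
    _ ≤ ‖a - f y‖ + ‖f y - g y‖ + ‖g y - b‖ := norm_add₃_le
    _ ≤ 2 * ε + ⨍ y in s, ‖f y - g y‖ ∂μ := by linarith [ha y hy, hb y hy]

theorem integral_prod_restrict_le_intervalIntegral {α : Type*} [MeasurableSpace α]
    {μ : Measure α} [SFinite μ] {F : ℝ × α → ℝ} (hF₀ : 0 ≤ F) {a b a' b' : ℝ} {s s' : Set α}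
    (hF : IntegrableOn F (Ioc a b ×ˢ s) (volume.prod μ)) (hab : a ≤ b) (ha : a ≤ a')
    (hb : b' ≤ b) (hs : s' ⊆ s) :
    ∫ p, F p ∂(volume.restrict (Ioc a' b')).prod (μ.restrict s') ≤
      ∫ t in a..b, ∫ x in s, F (t, x) ∂μ := by
  rw [intervalIntegral.integral_of_le hab, Measure.prod_restrict,
    ← integral_prod _ (by rwa [Measure.prod_restrict]), Measure.prod_restrict]
  exact setIntegral_mono_set hF (ae_of_all _ fun p => hF₀ p)
    (prod_mono (Ioc_subset_Ioc ha hb) hs).eventuallyLE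

theorem setAverage_norm_sub_le_sqrt {α E : Type*} [MeasurableSpace α] [NormedAddCommGroup E]
    [NormedSpace ℝ E] {μ : Measure α} [SFinite μ] {s : Set α} (hsm : MeasurableSet s)
    (hs : μ s ≠ ∞) {u ut : ℝ → α → E} {t₁ t₂ : ℝ} (h12 : t₁ ≤ t₂)
    (hu : ∀ y ∈ s, u t₂ y - u t₁ y = ∫ t in t₁..t₂, ut t y)
    (hut : MemLp (Function.uncurry ut) 2 ((volume.restrict (Ioc t₁ t₂)).prod (μ.restrict s))) :
    ⨍ y in s, ‖u t₂ y - u t₁ y‖ ∂μ ≤ √((t₂ - t₁) / μ.real s *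
      ∫ p, ‖ut p.1 p.2‖ ^ 2 ∂(volume.restrict (Ioc t₁ t₂)).prod (μ.restrict s)) := by
  set ν := (volume.restrict (Ioc t₁ t₂)).prod (μ.restrict s)
  set I := ∫ p, ‖ut p.1 p.2‖ ^ 2 ∂ν
  have : IsFiniteMeasure (μ.restrict s) := isFiniteMeasure_restrict.2 hs
  have hint : Integrable (fun p => ‖ut p.1 p.2‖) ν := (hut.integrable one_le_two).norm
  have hL1 : ∫ y in s, ‖u t₂ y - u t₁ y‖ ∂μ ≤ ∫ p, ‖ut p.1 p.2‖ ∂ν := by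
    rw [integral_prod_symm _ hint]
    refine integral_mono_of_nonneg (ae_of_all _ fun _ => norm_nonneg _)
      hint.integral_prod_right ?_
    filter_upwards [ae_restrict_mem hsm] with y hy
    rw [hu y hy, ← intervalIntegral.integral_of_le h12]
    exact intervalIntegral.norm_integral_le_integral_norm h12
  have hCS := integral_le_sqrt_measureReal_univ_mul_sqrt_integral_sq
    (ae_of_all _ fun _ => norm_nonneg _) hut.norm
  have hν : ν.real univ = (t₂ - t₁) * μ.real s := by
    simp [ν, measureReal_def, ← univ_prod_univ, Measure.prod_prod, ENNReal.toReal_mul, h12]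
  -- on a null set both sides are `0`, the junk values of `⨍` and of `/ 0`
  rcases (measureReal_nonneg : 0 ≤ μ.real s).eq_or_lt with h0 | h0
  · simp [setAverage_eq, ← h0]
  have hI : 0 ≤ I := integral_nonneg fun _ => sq_nonneg _
  calc ⨍ y in s, ‖u t₂ y - u t₁ y‖ ∂μ ≤ (μ.real s)⁻¹ * (√((t₂ - t₁) * μ.real s) * √I) := by
        rw [setAverage_eq, smul_eq_mul, ← hν]
        gcongr
        exact hL1.trans hCS
    _ = √((t₂ - t₁) / μ.real s * I) := by
        rw [inv_mul_eq_div, div_eq_iff h0.ne',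
          ← Real.sqrt_mul (mul_nonneg (sub_nonneg.2 h12) h0.le), ← Real.sqrt_sq h0.le,
          ← Real.sqrt_mul' _ (sq_nonneg _), Real.sqrt_sq h0.le]
        congr 1
        field_simp

theorem norm_sub_le_two_mul_add_sqrt {X E : Type*} [MetricSpace X] [ProperSpace X]
    [MeasurableSpace X] [BorelSpace X] {μ : Measure X} [IsFiniteMeasureOnCompacts μ]
    [NormedAddCommGroup E] [NormedSpace ℝ E] [CompleteSpace E] {Ω : Set X}
    (hΩb : Bornology.IsBounded Ω) (hΩm : MeasurableSet Ω) {u ut : ℝ → X → E}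
    (hu : Continuous (Function.uncurry u)) (hut : Continuous (Function.uncurry ut))
    {τ T t₁ t₂ : ℝ} (hderiv : ∀ y ∈ Ω, ∀ t ∈ Icc τ T, HasDerivAt (u · y) (ut t y) t)
    (ht₁ : τ ≤ t₁) (h12 : t₁ ≤ t₂) (ht₂ : t₂ ≤ T) {x : X} {R ε : ℝ}
    (hS : μ (ball x R ∩ Ω) ≠ 0)
    (hosc : ∀ t ∈ Icc τ T, ∀ y ∈ ball x R ∩ Ω, ‖u t x - u t y‖ ≤ ε) :
    ‖u t₂ x - u t₁ x‖ ≤ 2 * ε + √((t₂ - t₁) / μ.real (ball x R ∩ Ω) *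
      ∫ t in τ..T, ∫ y in Ω, ‖ut t y‖ ^ 2 ∂μ) := by
  set S := ball x R ∩ Ω
  have hSΩ : S ⊆ Ω := inter_subset_right
  have hK : IsCompact (closure Ω) := hΩb.isCompact_closure
  have hSfin : μ S ≠ ∞ := (measure_mono hSΩ |>.trans_lt hΩb.measure_lt_top).ne
  have ht₁_mem : t₁ ∈ Icc τ T := ⟨ht₁, h12.trans ht₂⟩
  have ht₂_mem : t₂ ∈ Icc τ T := ⟨ht₁.trans h12, ht₂⟩
  have hsq : IntegrableOn (fun p : ℝ × X => ‖ut p.1 p.2‖ ^ 2) (Ioc τ T ×ˢ Ω) (volume.prod μ) :=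
    ((hut.norm.pow 2).continuousOn.integrableOn_compact (isCompact_Icc.prod hK)).mono_set
      (prod_mono Ioc_subset_Icc_self subset_closure)
  have hFTC : ∀ y ∈ S, u t₂ y - u t₁ y = ∫ t in t₁..t₂, ut t y := fun y hy =>
    (intervalIntegral.integral_eq_sub_of_hasDerivAt (fun t ht => hderiv y (hSΩ hy) t
      (Icc_subset_Icc ht₁ ht₂ (uIcc_of_le h12 ▸ ht)))
      ((hut.comp (continuous_id.prodMk continuous_const)).intervalIntegrable t₁ t₂)).symm
  have hmem : MemLp (Function.uncurry ut) 2
      ((volume.restrict (Ioc t₁ t₂)).prod (μ.restrict S)) := by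
    rw [Measure.prod_restrict, memLp_two_iff_integrable_sq_norm hut.aestronglyMeasurable]
    exact hsq.mono_set (prod_mono (Ioc_subset_Ioc ht₁ ht₂) hSΩ)
  have hincr : IntegrableOn (fun y => ‖u t₂ y - u t₁ y‖) S μ :=
    (((hu.comp (Continuous.prodMk_right t₂)).sub
      (hu.comp (Continuous.prodMk_right t₁))).norm.continuousOn.integrableOn_compact hK).mono_set
      (hSΩ.trans subset_closure)
  calc ‖u t₂ x - u t₁ x‖ ≤ 2 * ε + ⨍ y in S, ‖u t₂ y - u t₁ y‖ ∂μ :=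
        norm_sub_le_two_mul_add_setAverage hS hSfin hincr (hosc t₂ ht₂_mem)
          fun y hy => norm_sub_rev (u t₁ y) _ ▸ hosc t₁ ht₁_mem y hy
    _ ≤ 2 * ε + √((t₂ - t₁) / μ.real S * ∫ t in τ..T, ∫ y in Ω, ‖ut t y‖ ^ 2 ∂μ) := by
        gcongr
        refine (setAverage_norm_sub_le_sqrt (measurableSet_ball.inter hΩm) hSfin h12 hFTC
          hmem).trans ?_
        gcongr
        exact integral_prod_restrict_le_intervalIntegral (fun p => sq_nonneg _) hsq
          (ht₁.trans (h12.trans ht₂)) ht₁ ht₂ hSΩ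

theorem sqrt_div_mul_le_mul_rpow {δ θ m I B : ℝ} (hδ : 0 < δ) (hθ : 0 < θ)
    (hm : θ * δ ^ (6 / 7 : ℝ) ≤ m) (hI : I ≤ B ^ 2) :
    √(δ / m * I) ≤ |B| / √θ * δ ^ (1 / 14 : ℝ) := by
  have hm₀ : 0 < m := lt_of_lt_of_le (by positivity) hm
  have hδ_split : δ = δ ^ (6 / 7 : ℝ) * (δ ^ (1 / 14 : ℝ)) ^ 2 := by
    rw [← Real.rpow_natCast, ← Real.rpow_mul hδ.le, ← Real.rpow_add hδ]
    norm_num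
  calc √(δ / m * I) ≤ √(δ / (θ * δ ^ (6 / 7 : ℝ)) * B ^ 2) := by
        refine Real.sqrt_le_sqrt ((mul_le_mul_of_nonneg_left hI (by positivity)).trans ?_)
        gcongr
    _ = √((|B| / √θ * δ ^ (1 / 14 : ℝ)) ^ 2) := by
        congr 1
        nth_rewrite 1 [hδ_split]
        field_simp
        rw [sq_abs, Real.sq_sqrt hθ.le, mul_comm]
    _ = |B| / √θ * δ ^ (1 / 14 : ℝ) := Real.sqrt_sq (by positivity)

theorem stmt_17_general (Ω : Set (Fin 3 → ℝ)) (hΩb : Bornology.IsBounded Ω)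
    (hΩm : MeasurableSet Ω)
    (θ : ℝ) (hθpos : 0 < θ)
    (hθ : ∀ x ∈ closure Ω, ∀ R : ℝ, 0 < R → R ≤ 1 →
      ENNReal.ofReal (θ * R ^ 3) ≤ volume (Metric.ball x R ∩ Ω))
    (A B τ T : ℝ) (hA : 0 ≤ A) :
    ∃ C : ℝ, 0 < C ∧
      ∀ (u ut : ℝ → (Fin 3 → ℝ) → (Fin 3 → ℝ)),
        Continuous (Function.uncurry u) →
        Continuous (Function.uncurry ut) →
        (∀ x ∈ closure Ω, ∀ t ∈ Icc τ T, HasDerivAt (fun s => u s x) (ut t x) t) →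
        (∀ t ∈ Icc τ T, ∀ x ∈ closure Ω, ∀ y ∈ closure Ω,
          ‖u t x - u t y‖ ≤ A * ‖x - y‖ ^ ((1:ℝ)/4)) →
        ((∫ t in τ..T, ∫ x in Ω, ‖ut t x‖ ^ 2) ≤ B ^ 2) →
        ∀ x ∈ closure Ω, ∀ t₁ t₂ : ℝ, τ ≤ t₁ → t₁ < t₂ → t₂ ≤ T →
          t₂ - t₁ ≤ 1 →
          ‖u t₂ x - u t₁ x‖ ≤ C * (t₂ - t₁) ^ ((1:ℝ)/14) := by
  refine ⟨2 * A + |B| / √θ + 1, by positivity, ?_⟩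
  intro u ut hu hut hderiv hHold hL2 x hx t₁ t₂ ht₁ h12 ht₂ hle1
  have hδ : 0 < t₂ - t₁ := sub_pos.2 h12
  set R := (t₂ - t₁) ^ (2 / 7 : ℝ)
  have hR : 0 < R := by positivity
  have hvol := hθ x hx R hR (Real.rpow_le_one hδ.le hle1 (by norm_num))
  have hR_cube : R ^ 3 = (t₂ - t₁) ^ (6 / 7 : ℝ) := by
    rw [← Real.rpow_natCast, ← Real.rpow_mul hδ.le]; norm_num
  have hosc : ∀ t ∈ Icc τ T, ∀ y ∈ ball x R ∩ Ω,
      ‖u t x - u t y‖ ≤ A * (t₂ - t₁) ^ (1 / 14 : ℝ) := fun t ht y hy => calc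
    ‖u t x - u t y‖ ≤ A * ‖x - y‖ ^ (1 / 4 : ℝ) := hHold t ht x hx y (subset_closure hy.2)
    _ ≤ A * R ^ (1 / 4 : ℝ) := by gcongr; exact (mem_ball'.1 hy.1).le
    _ = A * (t₂ - t₁) ^ (1 / 14 : ℝ) := by rw [← Real.rpow_mul hδ.le]; norm_num
  have hincr := norm_sub_le_two_mul_add_sqrt hΩb hΩm hu hut
    (fun y hy => hderiv y (subset_closure hy)) ht₁ h12.le ht₂
    ((ENNReal.ofReal_pos.2 (by positivity)).trans_le hvol).ne' hosc
  have hsqrt := sqrt_div_mul_le_mul_rpow (m := volume.real (ball x R ∩ Ω)) hδ hθpos (by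
    rwa [← hR_cube, measureReal_def, ← ENNReal.ofReal_le_iff_le_toReal
      (hΩb.subset inter_subset_right).measure_lt_top.ne]) hL2
  nlinarith [Real.rpow_nonneg hδ.le (1 / 14 : ℝ)]

/-- Hölder continuity in time: on a bounded domain with the interior measure
density property (Lipschitz domain), a field that is uniformly `C^{1/4}` in
space on `[τ, T]` and whose time derivative is square integrable in space-time
is `C^{1/14}` in time, with constant depending only on `A`, `B`, `Ω`. -/
theorem stmt_17 (Ω : Set (Fin 3 → ℝ)) (hΩb : Bornology.IsBounded Ω)
    (hΩm : MeasurableSet Ω)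
    (θ : ℝ) (hθpos : 0 < θ)
    (hθ : ∀ x ∈ closure Ω, ∀ R : ℝ, 0 < R → R ≤ 1 →
      ENNReal.ofReal (θ * R ^ 3) ≤ volume (Metric.ball x R ∩ Ω))
    (A B τ T : ℝ) (hτ : 0 < τ) (hτT : τ ≤ T) (hA : 0 ≤ A) (hB : 0 ≤ B) :
    ∃ C : ℝ, 0 < C ∧
      ∀ (u ut : ℝ → (Fin 3 → ℝ) → (Fin 3 → ℝ)),
        Continuous (Function.uncurry u) →
        Continuous (Function.uncurry ut) →
        (∀ x ∈ closure Ω, ∀ t ∈ Icc τ T, HasDerivAt (fun s => u s x) (ut t x) t) →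
        (∀ t ∈ Icc τ T, ∀ x ∈ closure Ω, ∀ y ∈ closure Ω,
          ‖u t x - u t y‖ ≤ A * ‖x - y‖ ^ ((1:ℝ)/4)) →
        ((∫ t in τ..T, ∫ x in Ω, ‖ut t x‖ ^ 2) ≤ B ^ 2) →
        ∀ x ∈ closure Ω, ∀ t₁ t₂ : ℝ, τ ≤ t₁ → t₁ < t₂ → t₂ ≤ T →
          t₂ - t₁ ≤ 1 →
          ‖u t₂ x - u t₁ x‖ ≤ C * (t₂ - t₁) ^ ((1:ℝ)/14) :=
  stmt_17_general Ω hΩb hΩm θ hθpos hθ A B τ T hA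
end
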